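/- arXiv:1604.08760 — 2 statements merged into one kernel-verified Lean document; each statement's English description precedes it below -/
import Mathlib

section
/- Let Σ = {a_1, a_2, ..., a_σ} with 3 ≤ σ ≤ n, set k = ⌊n/(σ−1)⌋ − 1, and let x = a_2 a_1^k a_3 a_1^k a_4 a_1^k ⋯ a_σ a_1^k a_1^(n−(σ−1)(k+1)), a word of length n. Then for all 0 ≤ j ≤ k, 2 ≤ i ≤ σ and 3 ≤ l ≤ σ, the word a_i a_1^j a_l is a minimal absent word of x, except for the words a_i a_1^k a_(i+1) with 2 ≤ i < σ, which occur in x. -/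
/-- The observed frequency `f(w)`: the number of starting positions at which
the word `w` occurs in the word `x` (occurrences may overlap). -/
def occ {α : Type*} [DecidableEq α] (x w : List α) : ℕ :=
  ((Finset.range (x.length + 1)).filter (fun i => (x.drop i).take w.length = w)).card

/-- The expected frequency `E(w)` of `w` in `x`:
`E(w) = f(w_p)·f(w_s)/f(w_i)` if `f(w_i) > 0`, and `E(w) = 0` otherwise,
where `w_p = w.dropLast` is the longest proper prefix of `w`,
`w_s = w.tail` is the longest proper suffix of `w`, and
`w_i = w.tail.dropLast` is the infix of `w` obtained by deleting its
first and last letters. -/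
noncomputable def expFreq {α : Type*} [DecidableEq α] (x w : List α) : ℝ :=
  if 0 < occ x w.tail.dropLast then
    ((occ x w.dropLast : ℝ) * (occ x w.tail : ℝ)) / (occ x w.tail.dropLast : ℝ)
  else 0

/-- The standard deviation `std(w) = (f(w) − E(w)) / max(√E(w), 1)`. -/
noncomputable def stdDev {α : Type*} [DecidableEq α] (x w : List α) : ℝ :=
  ((occ x w : ℝ) - expFreq x w) / max (Real.sqrt (expFreq x w)) 1

/-- `w` is a minimal absent word of `x`: `w` is absent from `x`
(`f(w) = 0`) and every proper factor of `w` occurs in `x`. -/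
def IsMAW {α : Type*} [DecidableEq α] (x w : List α) : Prop :=
  occ x w = 0 ∧ ∀ v : List α, v <:+: w → v ≠ w → 0 < occ x v

/-!
Each letter `a_m` with `2 ≤ m ≤ σ` occurs in `x` exactly once, at position `(m - 2)(k + 1)`, and
every other letter of `x` is `a_1`. An occurrence of `a_i a_1^j a_l` would therefore give
`(l - i)(k + 1) = j + 1 ∈ [1, k + 1]`, i.e. `j = k` and `l = i + 1`. On the other hand
`a_i a_1^j` is a prefix of the block `a_i a_1^k`, and `a_1^j a_l` a suffix of `a_(l-1) a_1^k a_l`,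
so every proper factor of `a_i a_1^j a_l` occurs.
-/

section Words

variable {α : Type*}

lemma occ_pos_iff [DecidableEq α] (x w : List α) : 0 < occ x w ↔ w <:+: x := by
  rw [occ, Finset.card_pos]
  constructor
  · rintro ⟨i, hi⟩
    rw [← (Finset.mem_filter.1 hi).2]
    exact (List.take_prefix _ _).isInfix.trans (List.drop_suffix i x).isInfix
  · rintro ⟨u, v, rfl⟩
    refine ⟨u.length, Finset.mem_filter.2 ⟨Finset.mem_range.2 (by simp), ?_⟩⟩
    rw [List.append_assoc, List.drop_left, List.take_left]

lemma isMAW_cons_append_singleton [DecidableEq α] {x u : List α} {b d : α}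
    (habs : ¬ b :: (u ++ [d]) <:+: x) (hpre : b :: u <:+: x) (hsuf : u ++ [d] <:+: x) :
    IsMAW x (b :: (u ++ [d])) := by
  refine ⟨Nat.eq_zero_of_not_pos (mt (occ_pos_iff x _).1 habs), fun v hv hne => ?_⟩
  rw [occ_pos_iff]
  rcases List.infix_cons_iff.1 hv with hv | hv
  · rw [← List.cons_append, List.prefix_concat_iff] at hv
    exact (hv.resolve_left hne).isInfix.trans hpre
  · exact hv.trans hsuf

lemma append_infix_flatten_map_range (B : ℕ → List α) {m t : ℕ} (h : t + 1 < m) :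
    B t ++ B (t + 1) <:+: ((List.range m).map B).flatten := by
  obtain ⟨r, rfl⟩ : ∃ r, m = t + 2 + r := ⟨m - (t + 2), by omega⟩
  rw [List.range_add, List.map_append, List.flatten_append]
  refine List.IsInfix.trans ?_ (List.prefix_append _ _).isInfix
  simp only [List.range_succ, List.map_append, List.flatten_append, List.map_cons, List.map_nil,
    List.flatten_cons, List.flatten_nil, List.append_nil, List.append_assoc]
  exact (List.suffix_append _ _).isInfix

lemma flatten_map_range_cons_replicate (b : ℕ → α) (d : α) (k m : ℕ) :
    ((List.range m).map fun t => b t :: List.replicate k d).flatten =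
      (List.range (m * (k + 1))).map fun p => if p % (k + 1) = 0 then b (p / (k + 1)) else d := by
  induction m with
  | zero => simp
  | succ m ih =>
    rw [List.range_succ, List.map_append, List.flatten_append, ih, Nat.succ_mul, List.range_add,
      List.map_append]
    congr 1
    refine List.ext_getElem (by simp) fun q hq _ => ?_
    simp only [List.map_cons, List.map_nil, List.flatten_cons, List.flatten_nil, List.append_nil,
      List.map_map, List.getElem_map, List.getElem_range, Function.comp_apply]
    have hq' : q < k + 1 := by simpa using hq
    rw [Nat.mul_add_mod_self_right, Nat.mod_eq_of_lt hq']
    rcases q with _ | q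
    · simp [Nat.mul_div_cancel m (Nat.succ_pos k)]
    · simp

end Words

section BlockWord

variable {α : Type*} (b : ℕ → α) (d : α) (k m r : ℕ)

def blockWord : List α :=
  ((List.range m).map fun t => b t :: List.replicate k d).flatten ++ List.replicate r d

lemma length_blockWord : (blockWord b d k m r).length = m * (k + 1) + r := by
  simp [blockWord, flatten_map_range_cons_replicate]

variable {b d k m r}

lemma cons_replicate_infix_blockWord {t j : ℕ} (ht : t < m) (hj : j ≤ k) :
    b t :: List.replicate j d <:+: blockWord b d k m r := by
  have hblock : b t :: List.replicate k d <:+: blockWord b d k m r :=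
    (List.infix_of_mem_flatten
      (List.mem_map_of_mem (f := fun t => b t :: List.replicate k d) (List.mem_range.2 ht))).trans
      (List.prefix_append _ _).isInfix
  refine List.IsInfix.trans ⟨[], List.replicate (k - j) d, ?_⟩ hblock
  rw [List.nil_append, List.cons_append, ← List.replicate_add, Nat.add_sub_cancel' hj]

lemma append_infix_blockWord {t : ℕ} (ht : t + 1 < m) :
    (b t :: List.replicate k d) ++ (b (t + 1) :: List.replicate k d) <:+: blockWord b d k m r :=
  (append_infix_flatten_map_range (fun t => b t :: List.replicate k d) ht).trans
    (List.prefix_append _ _).isInfix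

lemma cons_replicate_append_infix_blockWord {t : ℕ} (ht : t + 1 < m) :
    b t :: (List.replicate k d ++ [b (t + 1)]) <:+: blockWord b d k m r :=
  List.IsInfix.trans ⟨[], List.replicate k d, by simp⟩ (append_infix_blockWord ht)

lemma replicate_append_infix_blockWord {t j : ℕ} (ht : t + 1 < m) (hj : j ≤ k) :
    List.replicate j d ++ [b (t + 1)] <:+: blockWord b d k m r := by
  obtain ⟨i, rfl⟩ : ∃ i, k = i + j := ⟨k - j, by omega⟩
  refine List.IsInfix.trans ⟨b t :: List.replicate i d, List.replicate (i + j) d, ?_⟩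
    (append_infix_blockWord ht)
  simp only [List.replicate_add, List.cons_append, List.append_assoc, List.nil_append]

lemma eq_mul_of_getElem?_blockWord (hb : Set.InjOn b (Set.Iio m)) (hd : ∀ t < m, b t ≠ d)
    {t p : ℕ} (ht : t < m) (h : (blockWord b d k m r)[p]? = some (b t)) : p = t * (k + 1) := by
  rw [blockWord, flatten_map_range_cons_replicate, List.getElem?_append] at h
  split_ifs at h with hp
  · simp only [List.length_map, List.length_range] at hp
    simp only [List.getElem?_map, List.getElem?_range hp, Option.map_some, Option.some.injEq] at h
    split_ifs at h with hmod
    · have hq : p / (k + 1) < m := (Nat.div_lt_iff_lt_mul (Nat.succ_pos k)).2 hp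
      rw [← hb hq ht h, Nat.div_mul_cancel (Nat.dvd_of_mod_eq_zero hmod)]
    · exact absurd h.symm (hd t ht)
  · simp only [List.getElem?_replicate, Option.ite_none_right_eq_some, Option.some.injEq] at h
    exact absurd h.2.symm (hd t ht)

lemma eq_of_cons_replicate_append_infix_blockWord (hb : Set.InjOn b (Set.Iio m))
    (hd : ∀ t < m, b t ≠ d) {t s j : ℕ} (ht : t < m) (hs : s < m) (hj : j ≤ k)
    (h : b t :: (List.replicate j d ++ [b s]) <:+: blockWord b d k m r) :
    j = k ∧ s = t + 1 := by
  obtain ⟨p, -, hp⟩ := List.infix_iff_getElem?.1 h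
  have hfirst := eq_mul_of_getElem?_blockWord hb hd ht (by simpa using hp 0 (by simp))
  have hlast := eq_mul_of_getElem?_blockWord hb hd hs (by simpa using hp (j + 1) (by simp))
  have hts : t < s := by
    by_contra! hst
    have := Nat.mul_le_mul_right (k + 1) hst
    omega
  have hst : s < t + 2 := by
    by_contra! hst
    have := Nat.mul_le_mul_right (k + 1) hst
    rw [Nat.add_mul] at this
    omega
  obtain rfl : s = t + 1 := by omega
  rw [Nat.succ_mul] at hlast
  omega

end BlockWord

/-- Let `Σ = {a_1, …, a_σ}` with `3 ≤ σ ≤ n`, set `k = ⌊n/(σ−1)⌋ − 1`, and let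
`x = a_2 a_1^k a_3 a_1^k ⋯ a_σ a_1^k a_1^(n−(σ−1)(k+1))`, a word of length `n`.
Then for all `0 ≤ j ≤ k`, `2 ≤ i ≤ σ` and `3 ≤ l ≤ σ`, the word `a_i a_1^j a_l`
is a minimal absent word of `x`, except for the words `a_i a_1^k a_(i+1)` with
`2 ≤ i < σ`, which occur in `x`. -/
theorem stmt_14 {α : Type*} [DecidableEq α] (σ n : ℕ) (hσ : 3 ≤ σ) (hσn : σ ≤ n)
    (a : ℕ → α) (ha : Set.InjOn a (Set.Icc 1 σ)) :
    ∀ k x : _, k = n / (σ - 1) - 1 →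
      x = ((List.range (σ - 1)).map (fun t => a (t + 2) :: List.replicate k (a 1))).flatten
            ++ List.replicate (n - (σ - 1) * (k + 1)) (a 1) →
    x.length = n ∧
    ∀ j ≤ k, ∀ i, 2 ≤ i → i ≤ σ → ∀ l, 3 ≤ l → l ≤ σ →
      if j = k ∧ l = i + 1 ∧ i < σ then
        0 < occ x (a i :: (List.replicate j (a 1) ++ [a l]))
      else
        IsMAW x (a i :: (List.replicate j (a 1) ++ [a l])) := by
  intro k x hk hx
  set b : ℕ → α := fun t => a (t + 2)
  have hb : Set.InjOn b (Set.Iio (σ - 1)) := fun t ht s hs h => by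
    have := ha ⟨by omega, by simp at ht; omega⟩ ⟨by omega, by simp at hs; omega⟩ h
    omega
  have hd : ∀ t < σ - 1, b t ≠ a 1 := fun t ht h => by
    have := ha ⟨by omega, by omega⟩ ⟨le_rfl, by omega⟩ h
    omega
  have hblocks : (σ - 1) * (k + 1) ≤ n := by
    rw [hk, Nat.sub_add_cancel ((Nat.one_le_div_iff (by omega)).2 (by omega))]
    exact Nat.mul_div_le n (σ - 1)
  change x = blockWord b (a 1) k (σ - 1) _ at hx
  subst hx
  refine ⟨by rw [length_blockWord]; omega, ?_⟩
  intro j hj i hi hiσ l hl hlσ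
  obtain ⟨t, rfl⟩ : ∃ t, i = t + 2 := ⟨i - 2, by omega⟩
  obtain ⟨s, rfl⟩ : ∃ s, l = s + 1 + 2 := ⟨l - 3, by omega⟩
  change if _ then 0 < occ _ (b t :: (List.replicate j (a 1) ++ [b (s + 1)])) else
    IsMAW _ (b t :: (List.replicate j (a 1) ++ [b (s + 1)]))
  split_ifs with hexc
  · obtain ⟨rfl, hst, -⟩ := hexc
    obtain rfl : s = t := by omega
    exact (occ_pos_iff _ _).2 (cons_replicate_append_infix_blockWord (by omega))
  · refine isMAW_cons_append_singleton (fun h => hexc ?_)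
      (cons_replicate_infix_blockWord (by omega) hj) (replicate_append_infix_blockWord (by omega) hj)
    obtain ⟨rfl, hst⟩ := eq_of_cons_replicate_append_infix_blockWord hb hd (by omega) (by omega) hj h
    exact ⟨rfl, by omega, by omega⟩
end

section
/- Let ρ < 0 be a real number. The number of occurring ρ-avoided words w in x with |w| > 2 is at most 2n. -/
/-!
Send a word `w` to the set of its occurrence positions in `x`. These sets form a laminar family,
since two words occurring at the same position are prefix-comparable. If `std(w) < 0`, then
`f(w) < E(w) ≤ f(w_p)` (as `f(w_s) ≤ f(w_i)`), so an occurring avoided word occurs strictly less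
often than each of its proper prefixes; hence such words have pairwise distinct occurrence sets.
These are nonempty subsets of `{0, …, n - 1}`, and a laminar family of nonempty subsets of an
`m`-element set has fewer than `2m` members.
-/

section Laminar

variable {α : Type*}

def IsLaminar (L : Finset (Finset α)) : Prop :=
  ∀ A ∈ L, ∀ B ∈ L, A ⊆ B ∨ B ⊆ A ∨ Disjoint A B

theorem IsLaminar.mono {L M : Finset (Finset α)} (hL : IsLaminar L) (hML : M ⊆ L) :
    IsLaminar M :=
  fun A hA B hB => hL A (hML hA) B (hML hB)

/-- Splitting at a member `A` of maximal size, every other member lies inside `A` or inside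
`U \ A`, and induction applies to both parts. -/
theorem IsLaminar.card_insert_lt [DecidableEq α] {U : Finset α} (hU : U.Nonempty)
    {L : Finset (Finset α)} (hL : IsLaminar L) (hLU : ∀ A ∈ L, A.Nonempty ∧ A ⊆ U) :
    (insert U L).card < 2 * U.card := by
  induction U using Finset.strongInduction generalizing L with
  | H U ih =>
  rcases (L.erase U).eq_empty_or_nonempty with hempty | hne
  · have hsingle : insert U L ⊆ {U} := by
      intro B hB
      rcases Finset.mem_insert.1 hB with rfl | hBL
      · exact Finset.mem_singleton_self B
      · by_contra hBU
        exact Finset.notMem_empty B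
          (hempty ▸ Finset.mem_erase.2 ⟨fun h => hBU (Finset.mem_singleton.2 h), hBL⟩)
    have := Finset.card_le_card hsingle
    have := hU.card_pos
    simp only [Finset.card_singleton] at *
    omega
  obtain ⟨A, hA, hAmax⟩ := (L.erase U).exists_max_image Finset.card hne
  obtain ⟨hAU, hAL⟩ := Finset.mem_erase.1 hA
  obtain ⟨hAne, hAsub⟩ := hLU A hAL
  have hAssub : A ⊂ U := hAsub.ssubset_of_ne hAU
  set Lin := L.filter (· ⊂ A)
  set Lout := L.filter (Disjoint · A)
  have hcover : insert U L ⊆ insert U (insert A Lin ∪ Lout) := by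
    intro B hB
    simp only [Finset.mem_insert, Finset.mem_union, Finset.mem_filter, Lin, Lout] at hB ⊢
    rcases hB with rfl | hBL
    · exact Or.inl rfl
    by_cases hBU : B = U
    · exact Or.inl hBU
    rcases hL B hBL A hAL with hBA | hAB | hdisj
    · rcases eq_or_ne B A with rfl | hBA'
      · exact Or.inr (Or.inl (Or.inl rfl))
      · exact Or.inr (Or.inl (Or.inr ⟨hBL, hBA.ssubset_of_ne hBA'⟩))
    · exact Or.inr (Or.inl (Or.inl
        (Finset.eq_of_subset_of_card_le hAB (hAmax B (Finset.mem_erase.2 ⟨hBU, hBL⟩))).symm))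
    · exact Or.inr (Or.inr ⟨hBL, hdisj⟩)
  have hin : (insert A Lin).card < 2 * A.card :=
    ih A hAssub hAne (hL.mono (Finset.filter_subset _ _)) fun B hB => by
      obtain ⟨hBL, hBA⟩ := Finset.mem_filter.1 hB
      exact ⟨(hLU B hBL).1, hBA.subset⟩
  have hout : (insert (U \ A) Lout).card < 2 * (U \ A).card :=
    ih (U \ A) (Finset.sdiff_ssubset hAsub hAne)
      (Finset.sdiff_nonempty.2 fun h => hAssub.not_subset h)
      (hL.mono (Finset.filter_subset _ _)) fun B hB => by
        obtain ⟨hBL, hBA⟩ := Finset.mem_filter.1 hB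
        exact ⟨(hLU B hBL).1, Finset.subset_sdiff.2 ⟨(hLU B hBL).2, hBA⟩⟩
  have hsplit := Finset.card_sdiff_add_card_eq_card hAsub
  calc (insert U L).card ≤ (insert U (insert A Lin ∪ Lout)).card := Finset.card_le_card hcover
    _ ≤ 1 + (insert A Lin).card + Lout.card := by
      have := Finset.card_insert_le U (insert A Lin ∪ Lout)
      have := Finset.card_union_le (insert A Lin) Lout
      omega
    _ < 2 * U.card := by
      have := Finset.card_le_card (Finset.subset_insert (U \ A) Lout)
      omega

theorem IsLaminar.card_le [DecidableEq α] {U : Finset α} {L : Finset (Finset α)}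
    (hL : IsLaminar L) (hLU : ∀ A ∈ L, A.Nonempty ∧ A ⊆ U) : L.card ≤ 2 * U.card := by
  rcases U.eq_empty_or_nonempty with rfl | hU
  · rw [Finset.card_empty, mul_zero, Nat.le_zero, Finset.card_eq_zero,
      Finset.eq_empty_iff_forall_notMem]
    intro A hA
    obtain ⟨hAne, hA0⟩ := hLU A hA
    exact hAne.ne_empty (Finset.subset_empty.1 hA0)
  · exact ((Finset.card_le_card (Finset.subset_insert U L)).trans_lt (hL.card_insert_lt hU hLU)).le

end Laminar

section Occurrences

variable {α : Type*} [DecidableEq α]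

def occSet (x w : List α) : Finset ℕ :=
  (Finset.range (x.length + 1)).filter fun i => (x.drop i).take w.length = w

theorem occ_eq_card_occSet (x w : List α) : occ x w = (occSet x w).card := rfl

theorem mem_occSet {x w : List α} {i : ℕ} :
    i ∈ occSet x w ↔ i ≤ x.length ∧ w <+: x.drop i := by
  rw [occSet, Finset.mem_filter, Finset.mem_range, Nat.lt_succ_iff, List.prefix_iff_eq_take,
    eq_comm]

theorem occSet_subset_occSet_of_prefix (x : List α) {w v : List α} (h : w <+: v) :
    occSet x v ⊆ occSet x w := fun _ hi =>
  let ⟨hix, hv⟩ := mem_occSet.1 hi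
  mem_occSet.2 ⟨hix, h.trans hv⟩

theorem prefix_or_prefix_of_mem_occSet {x w v : List α} {i : ℕ} (hw : i ∈ occSet x w)
    (hv : i ∈ occSet x v) : w <+: v ∨ v <+: w :=
  List.prefix_or_prefix_of_prefix (mem_occSet.1 hw).2 (mem_occSet.1 hv).2

theorem isLaminar_image_occSet (x : List α) (W : Finset (List α)) :
    IsLaminar (W.image (occSet x)) := by
  simp only [IsLaminar, Finset.forall_mem_image]
  intro w _ v _
  by_cases hdisj : Disjoint (occSet x w) (occSet x v)
  · exact Or.inr (Or.inr hdisj)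
  obtain ⟨i, hiw, hiv⟩ := Finset.not_disjoint_iff.1 hdisj
  exact Or.imp_right Or.inl <| (prefix_or_prefix_of_mem_occSet hiv hiw).imp
    (occSet_subset_occSet_of_prefix x) (occSet_subset_occSet_of_prefix x)

theorem occSet_subset_range {x w : List α} (hw : w ≠ []) :
    occSet x w ⊆ Finset.range x.length := by
  intro i hi
  have hlen := (mem_occSet.1 hi).2.length_le
  rw [List.length_drop] at hlen
  have := List.length_pos_iff.2 hw
  rw [Finset.mem_range]
  omega

theorem infix_of_occ_pos {x w : List α} (h : 0 < occ x w) : w <:+: x := by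
  obtain ⟨i, hi⟩ := Finset.card_pos.1 h
  exact (mem_occSet.1 hi).2.isInfix.trans (List.drop_suffix i x).isInfix

theorem finite_setOf_occ_pos (x : List α) : {w | 0 < occ x w}.Finite :=
  x.sublists.finite_toSet.subset fun _ hw => List.mem_sublists.2 (infix_of_occ_pos hw).sublist

end Occurrences

section Avoided

variable {α : Type*} [DecidableEq α]

theorem expFreq_le_occ_dropLast (x w : List α) : expFreq x w ≤ occ x w.dropLast := by
  unfold expFreq
  split_ifs with h
  · have hsi : (occ x w.tail : ℝ) ≤ occ x w.tail.dropLast := by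
      exact_mod_cast Finset.card_le_card
        (occSet_subset_occSet_of_prefix x (List.dropLast_prefix w.tail))
    rw [div_le_iff₀ (by exact_mod_cast h)]
    exact mul_le_mul_of_nonneg_left hsi (Nat.cast_nonneg _)
  · exact Nat.cast_nonneg _

theorem occ_lt_expFreq_of_stdDev_neg {x w : List α} (h : stdDev x w < 0) :
    (occ x w : ℝ) < expFreq x w := by
  have hpos : 0 < max √(expFreq x w) 1 := lt_max_of_lt_right one_pos
  rw [stdDev, div_lt_iff₀ hpos, zero_mul, sub_neg] at h
  exact h

theorem occ_lt_occ_dropLast_of_stdDev_neg {x w : List α} (h : stdDev x w < 0) :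
    occ x w < occ x w.dropLast := by
  exact_mod_cast (occ_lt_expFreq_of_stdDev_neg h).trans_le (expFreq_le_occ_dropLast x w)

theorem occ_lt_occ_of_prefix_of_stdDev_neg {x w v : List α} (hv : stdDev x v < 0) (h : w <+: v)
    (hne : w ≠ v) : occ x v < occ x w := by
  have hlt : w.length < v.length := lt_of_not_ge fun hle => hne (h.eq_of_length_le hle)
  have hw : w <+: v.dropLast := by
    rw [List.dropLast_eq_take, List.prefix_take_iff]
    exact ⟨h, by omega⟩
  calc occ x v < occ x v.dropLast := occ_lt_occ_dropLast_of_stdDev_neg hv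
    _ ≤ occ x w := Finset.card_le_card (occSet_subset_occSet_of_prefix x hw)

theorem injOn_occSet (x : List α) : Set.InjOn (occSet x) {w | 0 < occ x w ∧ stdDev x w < 0} := by
  intro w hw v hv heq
  by_contra hne
  have hocc : occ x w = occ x v := by rw [occ_eq_card_occSet, occ_eq_card_occSet, heq]
  obtain ⟨i, hi⟩ : (occSet x w).Nonempty := Finset.card_pos.1 hw.1
  rcases prefix_or_prefix_of_mem_occSet hi (heq ▸ hi) with h | h
  · exact (occ_lt_occ_of_prefix_of_stdDev_neg hv.2 h hne).ne' hocc
  · exact (occ_lt_occ_of_prefix_of_stdDev_neg hw.2 h (Ne.symm hne)).ne hocc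

theorem card_le_of_forall_stdDev_neg (x : List α) (T : Finset (List α))
    (hT : ∀ w ∈ T, 0 < occ x w ∧ stdDev x w < 0) : T.card ≤ 2 * x.length := by
  have hsub : ∀ A ∈ T.image (occSet x), A.Nonempty ∧ A ⊆ Finset.range x.length := by
    simp only [Finset.forall_mem_image]
    intro w hw
    have hnil : w ≠ [] := by
      rintro rfl
      exact (occ_lt_occ_dropLast_of_stdDev_neg (hT [] hw).2).false
    exact ⟨Finset.card_pos.1 (hT w hw).1, occSet_subset_range hnil⟩
  calc T.card = (T.image (occSet x)).card :=
        (Finset.card_image_of_injOn fun w hw v hv => injOn_occSet x (hT w hw) (hT v hv)).symm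
    _ ≤ 2 * (Finset.range x.length).card := (isLaminar_image_occSet x T).card_le hsub
    _ = 2 * x.length := by rw [Finset.card_range]

end Avoided

/-- Let `ρ < 0`. The number of occurring `ρ`-avoided words `w` in `x` with
`|w| > 2` is at most `2n`. -/
theorem stmt_16 {α : Type*} [DecidableEq α] (ρ : ℝ) (hρ : ρ < 0) (x : List α) :
    {w : List α | 2 < w.length ∧ 0 < occ x w ∧ stdDev x w ≤ ρ}.Finite ∧
    {w : List α | 2 < w.length ∧ 0 < occ x w ∧ stdDev x w ≤ ρ}.ncard ≤
      2 * x.length := by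
  have hfin : {w : List α | 2 < w.length ∧ 0 < occ x w ∧ stdDev x w ≤ ρ}.Finite :=
    (finite_setOf_occ_pos x).subset fun _ hw => hw.2.1
  refine ⟨hfin, ?_⟩
  rw [Set.ncard_eq_toFinset_card _ hfin]
  refine card_le_of_forall_stdDev_neg x _ fun w hw => ?_
  rw [Set.Finite.mem_toFinset] at hw
  exact ⟨hw.2.1, hw.2.2.trans_lt hρ⟩
end
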